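/- arXiv:0709.3446 — 5 statements merged into one kernel-verified Lean document; each statement's English description precedes it below -/
import Mathlib

section
/- For every real number a > 0, the integral over (0,∞) of (e^{-x} - (1+x)^{-a})/x with respect to x equals ψ(a); that is, ∫_0^∞ (e^{-x} - (1+x)^{-a}) dx/x = ψ(a). -/
/-!
Differentiating Euler's integral gives `Γ'(a) = ∫₀^∞ t^(a-1) e^(-t) log t dt`, and Frullani's
integral gives `log t = ∫₀^∞ (e^(-x) - e^(-tx)) dx / x`. After exchanging the two integrations the
inner integral is `∫₀^∞ t^(a-1) e^(-t) (e^(-x) - e^(-tx)) dt = Γ(a) (e^(-x) - (1+x)^(-a))`, so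
`Γ'(a) = Γ(a) ∫₀^∞ (e^(-x) - (1+x)^(-a)) dx / x`. Fubini applies because the Frullani integrand has
constant sign, so its absolute integral is `|log t|`, and `t^(a-1) |log t| e^(-t)` is integrable
since `|log t| ≤ (2/a) t^(-a/2) + t`.
-/

open MeasureTheory Real

/-- The digamma function `ψ(x) = Γ'(x)/Γ(x)`. -/
noncomputable def digamma (x : ℝ) : ℝ := deriv Real.Gamma x / Real.Gamma x

open Set Filter Topology

section Frullani

variable {c d x : ℝ}

lemma exp_neg_mul_sub_exp_neg_mul_div_nonneg (hcd : c ≤ d) (hx : 0 < x) :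
    0 ≤ (exp (-(c * x)) - exp (-(d * x))) / x :=
  div_nonneg (sub_nonneg.2 (exp_le_exp.2 (by nlinarith))) hx.le

lemma exp_neg_mul_sub_exp_neg_mul_div_le (hx : 0 < x) :
    (exp (-(c * x)) - exp (-(d * x))) / x ≤ (d - c) * exp (-(c * x)) := by
  have hsplit : exp (-(d * x)) = exp (-(c * x)) * exp (-((d - c) * x)) := by
    rw [← exp_add]; ring_nf
  rw [div_le_iff₀ hx, hsplit]
  nlinarith [exp_pos (-(c * x)), add_one_le_exp (-((d - c) * x))]

lemma integrableOn_exp_neg_mul_sub_exp_neg_mul_div (hc : 0 < c) (hd : 0 < d) :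
    IntegrableOn (fun x => (exp (-(c * x)) - exp (-(d * x))) / x) (Ioi 0) := by
  wlog hcd : c ≤ d generalizing c d
  · refine (this hd hc (le_of_not_ge hcd)).neg.congr_fun (fun x _ => ?_) measurableSet_Ioi
    simp only [Pi.neg_apply]
    ring
  refine ((exp_neg_integrableOn_Ioi 0 hc).const_mul (d - c)).mono'
    (by fun_prop : Measurable _).aestronglyMeasurable ?_
  filter_upwards [ae_restrict_mem measurableSet_Ioi] with x hx
  rw [norm_of_nonneg (exp_neg_mul_sub_exp_neg_mul_div_nonneg hcd hx), neg_mul]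
  exact exp_neg_mul_sub_exp_neg_mul_div_le hx

lemma integral_exp_neg_mul_sub_exp_neg_mul_div (hc : 0 < c) (hd : 0 < d) :
    ∫ x in Ioi 0, (exp (-(c * x)) - exp (-(d * x))) / x = log d - log c := by
  have hcont : Continuous fun u : ℝ => exp (-u) := by fun_prop
  have hL : Tendsto (fun u : ℝ => exp (-u)) (𝓝[>] 0) (𝓝 1) :=
    (hcont.tendsto' 0 1 (by simp)).mono_left nhdsWithin_le_nhds
  have h := Frullani.integral_Ioi_eq (hcont.continuousOn.locallyIntegrableOn measurableSet_Ioi)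
    hc hd hL tendsto_exp_neg_atTop_nhds_zero
    (by simpa only [smul_eq_mul, inv_mul_eq_div] using
      integrableOn_exp_neg_mul_sub_exp_neg_mul_div hc hd)
  simpa only [smul_eq_mul, inv_mul_eq_div, sub_zero, mul_one, log_div hd.ne' hc.ne'] using h

lemma integral_abs_exp_neg_mul_sub_exp_neg_mul_div (hc : 0 < c) (hd : 0 < d) :
    ∫ x in Ioi 0, |(exp (-(c * x)) - exp (-(d * x))) / x| = |log d - log c| := by
  wlog hcd : c ≤ d generalizing c d
  · simpa only [abs_div, abs_sub_comm] using this hd hc (le_of_not_ge hcd)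
  rw [abs_of_nonneg (sub_nonneg.2 (log_le_log hc hcd)),
    ← integral_exp_neg_mul_sub_exp_neg_mul_div hc hd]
  exact setIntegral_congr_fun measurableSet_Ioi fun x hx =>
    abs_of_nonneg (exp_neg_mul_sub_exp_neg_mul_div_nonneg hcd hx)

end Frullani

section Gamma

lemma abs_log_le_inv_mul_rpow_neg_add_self {ε t : ℝ} (hε : 0 < ε) (ht : 0 < t) :
    |log t| ≤ ε⁻¹ * t ^ (-ε) + t := by
  rcases le_total t 1 with ht1 | ht1
  · have hpow : 0 < t ^ ε := rpow_pos_of_pos ht ε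
    have h := abs_log_mul_self_rpow_lt t ε ht ht1 hε
    rw [abs_mul, abs_of_pos hpow, ← lt_div_iff₀ hpow, one_div, div_eq_mul_inv] at h
    rw [rpow_neg ht.le]
    linarith
  · rw [abs_of_nonneg (log_nonneg ht1)]
    have hrpow : 0 ≤ ε⁻¹ * t ^ (-ε) := by positivity
    linarith [log_le_sub_one_of_pos ht]

lemma integrableOn_rpow_mul_abs_log_mul_exp_neg {a : ℝ} (ha : 0 < a) :
    IntegrableOn (fun t => t ^ (a - 1) * (|log t| * exp (-t))) (Ioi 0) := by
  have hdom := ((GammaIntegral_convergent (half_pos ha)).const_mul (a / 2)⁻¹).add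
    (GammaIntegral_convergent (by linarith : 0 < a + 1))
  refine hdom.mono' (by fun_prop : Measurable _).aestronglyMeasurable ?_
  filter_upwards [ae_restrict_mem measurableSet_Ioi] with t ht
  have hlog := abs_log_le_inv_mul_rpow_neg_add_self (half_pos ha) ht
  have hrpow : 0 ≤ t ^ (a - 1) := rpow_nonneg ht.le _
  rw [norm_of_nonneg (by positivity), Pi.add_apply]
  calc t ^ (a - 1) * (|log t| * exp (-t))
      ≤ t ^ (a - 1) * (((a / 2)⁻¹ * t ^ (-(a / 2)) + t) * exp (-t)) := by gcongr
    _ = _ := by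
      rw [show a / 2 - 1 = a - 1 + -(a / 2) by ring, show a + 1 - 1 = a - 1 + 1 by ring,
        rpow_add ht, rpow_add_one ht.ne']
      ring

lemma hasDerivAt_Gamma_integral {a : ℝ} (ha : 0 < a) :
    HasDerivAt Gamma (∫ t in Ioi 0, t ^ (a - 1) * (log t * exp (-t))) a := by
  have hre : 0 < (a : ℂ).re := by simpa using ha
  have hΓ : Complex.Gamma =ᶠ[𝓝 (a : ℂ)] Complex.GammaIntegral :=
    ((Complex.continuous_re.isOpen_preimage _ isOpen_Ioi).eventually_mem hre).mono
      fun s hs => Complex.Gamma_eq_integral hs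
  have hint : ∫ t : ℝ in Ioi 0, (t : ℂ) ^ ((a : ℂ) - 1) * (log t * exp (-t))
      = ↑(∫ t in Ioi 0, t ^ (a - 1) * (log t * exp (-t))) := by
    rw [← integral_complex_ofReal]
    refine setIntegral_congr_fun measurableSet_Ioi fun t ht => ?_
    push_cast [Complex.ofReal_cpow ht.le]
    rfl
  have h := (Complex.hasDerivAt_GammaIntegral hre).congr_of_eventuallyEq hΓ
  rw [hint] at h
  simpa [Complex.Gamma_ofReal] using h.real_of_complex

end Gamma

section Fubini

variable {a : ℝ}

lemma integral_rpow_mul_exp_neg_mul_exp_neg_sub_div (ha : 0 < a) {x : ℝ} (hx : 0 < x) :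
    ∫ t in Ioi 0, t ^ (a - 1) * exp (-t) * ((exp (-x) - exp (-(t * x))) / x)
      = Gamma a * ((exp (-x) - (1 + x) ^ (-a)) / x) := by
  have hint {r : ℝ} (hr : 0 < r) :
      IntegrableOn (fun t => t ^ (a - 1) * exp (-(r * t))) (Ioi 0) := by
    simpa only [rpow_one, neg_mul] using
      integrableOn_rpow_mul_exp_neg_mul_rpow (by linarith : -1 < a - 1) one_pos hr
  have hx1 : 0 < 1 + x := by linarith
  have hsplit : ∀ t ∈ Ioi (0 : ℝ), t ^ (a - 1) * exp (-t) * ((exp (-x) - exp (-(t * x))) / x)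
      = exp (-x) / x * (t ^ (a - 1) * exp (-(1 * t)))
        - x⁻¹ * (t ^ (a - 1) * exp (-((1 + x) * t))) := fun t _ => by
    rw [show -((1 + x) * t) = -t + -(t * x) by ring, exp_add, one_mul]
    ring
  rw [setIntegral_congr_fun measurableSet_Ioi hsplit,
    integral_sub ((hint one_pos).const_mul _) ((hint hx1).const_mul _),
    integral_const_mul, integral_const_mul, integral_rpow_mul_exp_neg_mul_Ioi ha one_pos,
    integral_rpow_mul_exp_neg_mul_Ioi ha hx1, div_one, one_rpow, one_div, inv_rpow hx1.le,
    ← rpow_neg hx1.le]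
  ring

lemma integrable_rpow_mul_exp_neg_mul_exp_neg_sub_div_prod (ha : 0 < a) :
    Integrable (fun p : ℝ × ℝ =>
        p.1 ^ (a - 1) * exp (-p.1) * ((exp (-p.2) - exp (-(p.1 * p.2))) / p.2))
      ((volume.restrict (Ioi 0)).prod (volume.restrict (Ioi 0))) := by
  rw [integrable_prod_iff (by fun_prop : Measurable _).aestronglyMeasurable]
  constructor
  · filter_upwards [ae_restrict_mem measurableSet_Ioi] with t ht
    simpa only [one_mul] using
      (integrableOn_exp_neg_mul_sub_exp_neg_mul_div one_pos ht).const_mul (t ^ (a - 1) * exp (-t))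
  · refine (integrableOn_rpow_mul_abs_log_mul_exp_neg ha).congr ?_
    filter_upwards [ae_restrict_mem measurableSet_Ioi] with t ht
    have habs := integral_abs_exp_neg_mul_sub_exp_neg_mul_div one_pos ht
    simp only [one_mul, log_one, sub_zero] at habs
    simp only [norm_mul, norm_eq_abs, abs_of_nonneg (rpow_nonneg ht.le _), abs_exp,
      integral_const_mul, habs]
    ring

end Fubini

theorem integral_exp_sub_rpow_div_eq_digamma (a : ℝ) (ha : 0 < a) :
    ∫ x in Set.Ioi (0 : ℝ), (Real.exp (-x) - (1 + x) ^ (-a)) / x = digamma a := by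
  have hderiv : deriv Gamma a = Gamma a * ∫ x in Ioi 0, (exp (-x) - (1 + x) ^ (-a)) / x := calc
    deriv Gamma a = ∫ t in Ioi 0, t ^ (a - 1) * (log t * exp (-t)) :=
      (hasDerivAt_Gamma_integral ha).deriv
    _ = ∫ t in Ioi 0, ∫ x in Ioi 0,
          t ^ (a - 1) * exp (-t) * ((exp (-x) - exp (-(t * x))) / x) :=
      setIntegral_congr_fun measurableSet_Ioi fun t ht => by
        have h := integral_exp_neg_mul_sub_exp_neg_mul_div one_pos ht
        simp only [one_mul, log_one, sub_zero] at h
        rw [integral_const_mul, h]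
        ring
    _ = ∫ x in Ioi 0, ∫ t in Ioi 0,
          t ^ (a - 1) * exp (-t) * ((exp (-x) - exp (-(t * x))) / x) :=
      integral_integral_swap (integrable_rpow_mul_exp_neg_mul_exp_neg_sub_div_prod ha)
    _ = ∫ x in Ioi 0, Gamma a * ((exp (-x) - (1 + x) ^ (-a)) / x) :=
      setIntegral_congr_fun measurableSet_Ioi fun x hx =>
        integral_rpow_mul_exp_neg_mul_exp_neg_sub_div ha hx
    _ = _ := integral_const_mul _ _
  rw [digamma, hderiv, mul_div_cancel_left₀ _ (Gamma_pos_of_pos ha).ne']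
end

section
/- The integral over (0,∞) of (e^{-x} - 1/(1+x))/x with respect to x equals -γ; that is, ∫_0^∞ (e^{-x} - 1/(1+x)) dx/x = -γ. -/
/-!
On `(0, ∞)` the integrand is `e^{-x} log x + G'(x)` with `G(x) = log (1 + x) - (1 - e^{-x}) log x`,
and `G` tends to `0` both at `0⁺` and at `∞`. The integral is therefore
`∫₀^∞ e^{-x} log x dx = Γ'(1) = -γ`.
-/

open MeasureTheory Real Set Filter Topology

theorem integral_exp_neg_mul_log_Ioi_zero :
    ∫ t in Ioi (0 : ℝ), exp (-t) * log t = -eulerMascheroniConstant := by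
  have hGammaIntegral :
      HasDerivAt Complex.GammaIntegral ↑(∫ t in Ioi (0 : ℝ), exp (-t) * log t) 1 := by
    convert Complex.hasDerivAt_GammaIntegral (s := 1) (by norm_num) using 1
    rw [← integral_complex_ofReal]
    refine setIntegral_congr_fun measurableSet_Ioi fun t _ ↦ ?_
    simp only [sub_self, Complex.cpow_zero, one_mul]
    push_cast
    ring
  have hGamma : HasDerivAt Complex.Gamma ↑(∫ t in Ioi (0 : ℝ), exp (-t) * log t) 1 :=
    hGammaIntegral.congr_of_eventuallyEq <| by
      filter_upwards [(isOpen_lt continuous_const Complex.continuous_re).mem_nhds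
        (by norm_num : (0 : ℝ) < (1 : ℂ).re)] with s hs using Complex.Gamma_eq_integral hs
  have hGammaReal :
      HasDerivAt (fun x : ℝ ↦ (Gamma x : ℂ)) ↑(∫ t in Ioi (0 : ℝ), exp (-t) * log t) 1 := by
    simpa only [← Complex.Gamma_ofReal, Complex.ofReal_one] using hGamma.comp_ofReal
  exact_mod_cast hGammaReal.unique hasDerivAt_Gamma_one.ofReal_comp

theorem integrableOn_exp_neg_mul_log :
    IntegrableOn (fun t ↦ exp (-t) * log t) (Ioi (0 : ℝ)) := by
  have hmeas : AEStronglyMeasurable (fun t ↦ exp (-t) * log t) :=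
    (by fun_prop : Measurable fun t ↦ exp (-t) * log t).aestronglyMeasurable
  rw [← Ioc_union_Ioi_eq_Ioi zero_le_one, integrableOn_union]
  constructor
  · refine Integrable.mono (intervalIntegral.intervalIntegrable_log' (a := 0) (b := 1)).1
      hmeas.restrict ?_
    filter_upwards [ae_restrict_mem measurableSet_Ioc] with t ht
    rw [norm_mul, norm_of_nonneg (exp_pos _).le]
    exact mul_le_of_le_one_left (norm_nonneg _) (exp_le_one_iff.2 (by linarith [ht.1]))
  · refine Integrable.mono ((GammaIntegral_convergent two_pos).mono_set
      (Ioi_subset_Ioi zero_le_one)) hmeas.restrict ?_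
    filter_upwards [ae_restrict_mem measurableSet_Ioi] with t (ht : 1 < t)
    rw [show (2 : ℝ) - 1 = 1 by norm_num, rpow_one, norm_mul, norm_mul,
      norm_of_nonneg (log_nonneg ht.le), norm_of_nonneg (by linarith : (0 : ℝ) ≤ t)]
    gcongr
    exact (log_le_sub_one_of_pos (by linarith)).trans (by linarith)

theorem abs_exp_neg_sub_inv_one_add_div_le {x : ℝ} (hx : 0 < x) :
    |(exp (-x) - 1 / (1 + x)) / x| ≤ 2 * (1 + x ^ 2)⁻¹ := by
  have hlow := one_sub_le_exp_neg x
  have hup : exp (-x) * (1 + x) ≤ 1 :=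
    calc exp (-x) * (1 + x) ≤ exp (-x) * exp x := by gcongr; linarith [add_one_le_exp x]
      _ = 1 := by rw [← exp_add, neg_add_cancel, exp_zero]
  have hpos := exp_pos (-x)
  have heq : (exp (-x) - 1 / (1 + x)) / x = (exp (-x) * (1 + x) - 1) / (x * (1 + x)) := by
    field_simp
  rw [heq, abs_of_nonpos (div_nonpos_of_nonpos_of_nonneg (by linarith) (by positivity)),
    ← neg_div, neg_sub, div_le_iff₀ (by positivity)]
  field_simp
  nlinarith [mul_nonneg hx.le hpos.le, mul_nonneg (mul_nonneg hx.le hx.le) hpos.le]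

theorem integrableOn_exp_neg_sub_inv_one_add_div :
    IntegrableOn (fun x ↦ (exp (-x) - 1 / (1 + x)) / x) (Ioi (0 : ℝ)) := by
  refine Integrable.mono (integrable_inv_one_add_sq.const_mul 2).integrableOn
    (by fun_prop : Measurable fun x : ℝ ↦ (exp (-x) - 1 / (1 + x)) / x).aestronglyMeasurable ?_
  filter_upwards [ae_restrict_mem measurableSet_Ioi] with x (hx : 0 < x)
  rw [norm_eq_abs, norm_of_nonneg (by positivity)]
  exact abs_exp_neg_sub_inv_one_add_div_le hx

theorem tendsto_one_sub_exp_neg_mul_log_nhdsGE_zero :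
    Tendsto (fun x ↦ (1 - exp (-x)) * log x) (𝓝[≥] 0) (𝓝 0) := by
  have hmul_log : Tendsto (fun x ↦ ‖x * log x‖) (𝓝[≥] 0) (𝓝 0) := by
    simpa using (continuous_mul_log.tendsto 0).norm.mono_left nhdsWithin_le_nhds
  refine squeeze_zero_norm' ?_ hmul_log
  filter_upwards [self_mem_nhdsWithin] with x (hx : 0 ≤ x)
  rw [norm_mul, norm_mul, norm_of_nonneg (by simpa using exp_le_one_iff.2 (neg_nonpos.2 hx)),
    norm_of_nonneg hx]
  gcongr
  linarith [one_sub_le_exp_neg x]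

theorem tendsto_exp_neg_mul_log_atTop : Tendsto (fun x ↦ exp (-x) * log x) atTop (𝓝 0) := by
  refine squeeze_zero' ?_ ?_ (by simpa using tendsto_pow_mul_exp_neg_atTop_nhds_zero 1)
  · filter_upwards [eventually_ge_atTop 1] with x hx
    exact mul_nonneg (exp_pos _).le (log_nonneg hx)
  · filter_upwards [eventually_ge_atTop 1] with x hx
    rw [mul_comm]
    gcongr
    exact (log_le_sub_one_of_pos (by linarith)).trans (by linarith)

theorem hasDerivAt_log_one_add_sub_one_sub_exp_neg_mul_log {x : ℝ} (hx : 0 < x) :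
    HasDerivAt (fun x ↦ log (1 + x) - (1 - exp (-x)) * log x)
      ((exp (-x) - 1 / (1 + x)) / x - exp (-x) * log x) x := by
  have hlog_one_add : HasDerivAt (fun x ↦ log (1 + x)) (1 / (1 + x)) x := by
    simpa using ((hasDerivAt_id x).const_add 1).log (by positivity)
  have hone_sub_exp : HasDerivAt (fun x ↦ 1 - exp (-x)) (exp (-x)) x := by
    simpa using ((hasDerivAt_neg x).exp).const_sub 1
  refine (hlog_one_add.sub (hone_sub_exp.mul (hasDerivAt_log hx.ne'))).congr_deriv ?_
  field_simp
  ring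

theorem integral_exp_sub_inv_one_add_div_eq_neg_gamma :
    ∫ x in Set.Ioi (0 : ℝ), (Real.exp (-x) - 1 / (1 + x)) / x
      = -Real.eulerMascheroniConstant := by
  have hcont : ContinuousWithinAt (fun x ↦ log (1 + x) - (1 - exp (-x)) * log x) (Ici 0) 0 := by
    have hlog : ContinuousAt (fun x : ℝ ↦ log (1 + x)) 0 := by fun_prop (disch := norm_num)
    simpa [ContinuousWithinAt] using
      (hlog.tendsto.mono_left nhdsWithin_le_nhds).sub tendsto_one_sub_exp_neg_mul_log_nhdsGE_zero
  have hlim : Tendsto (fun x ↦ log (1 + x) - (1 - exp (-x)) * log x) atTop (𝓝 0) := by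
    have := (tendsto_log_comp_add_sub_log 1).add tendsto_exp_neg_mul_log_atTop
    rw [add_zero] at this
    exact this.congr fun x ↦ by rw [add_comm x 1]; ring
  have hftc := integral_Ioi_of_hasDerivAt_of_tendsto hcont
    (fun x hx ↦ hasDerivAt_log_one_add_sub_one_sub_exp_neg_mul_log hx)
    (integrableOn_exp_neg_sub_inv_one_add_div.sub integrableOn_exp_neg_mul_log) hlim
  rw [integral_sub integrableOn_exp_neg_sub_inv_one_add_div integrableOn_exp_neg_mul_log,
    integral_exp_neg_mul_log_Ioi_zero] at hftc
  simp only [add_zero, log_one, neg_zero, exp_zero, sub_self, zero_mul] at hftc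
  linarith
end

section
/- For every real number a > 0, ∫_0^1 (e^{1 - 1/t} - t^a)/(t(1-t)) dt = ψ(a). -/
open MeasureTheory Real intervalIntegral

/-!
Write `I(a)` for the integral. Both `I` and `ψ` are monotone on `(0, ∞)` (for `ψ` this is the
log-convexity of `Γ`) and satisfy `f (a + 1) = f a + 1 / a`. Two such functions differ by a
`1`-periodic function which is squeezed by the increments `1 / a → 0`, so they coincide once they
agree at `1`.

For the value at `1`, Fubini applied to `∫ s in 1..b, e^{s (1 - 1/t)} / t²` gives the Frullani-type
identity `∫₀¹ (e^{1 - 1/t} - e^{b (1 - 1/t)}) / (t (1 - t)) dt = log b`. Hence `log b - I(b)` is the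
integral of `(t^b - e^{b (1 - 1/t)}) / (t (1 - t))`, which lies between `0` and
`b (t^{b-2} - t^{b-1})`, so `0 ≤ log b - I(b) ≤ 1 / (b - 1)`. Together with `I(n + 1) = I(1) + H_n`
and `H_n - log (n + 1) → γ` this gives `I(1) = -γ = ψ(1)`.
-/

open Set Filter Topology

theorem eqOn_Ioi_of_monotoneOn_of_add_one {f g r : ℝ → ℝ} (hf : MonotoneOn f (Ioi 0))
    (hg : MonotoneOn g (Ioi 0)) (hfr : ∀ x, 0 < x → f (x + 1) = f x + r x)
    (hgr : ∀ x, 0 < x → g (x + 1) = g x + r x) (hr : Tendsto r atTop (𝓝 0)) (h1 : f 1 = g 1) :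
    EqOn f g (Ioi 0) := by
  have shift : ∀ x, 0 < x → ∀ n : ℕ, f (x + n) - g (x + n) = f x - g x := by
    intro x hx n
    induction n with
    | zero => simp
    | succ n ih =>
      have hxn : 0 < x + n := by positivity
      rw [Nat.cast_succ, ← add_assoc, hfr _ hxn, hgr _ hxn]
      linarith
  intro x (hx : 0 < x)
  have habs_le : ∀ n : ℕ, |f x - g x| ≤ r (⌊x⌋₊ + 1 + n) := by
    intro n
    set m : ℝ := ⌊x⌋₊ + 1 + n
    have hm : 0 < m := by positivity
    have hxn : 0 < x + ↑(n + 1) := by positivity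
    have hm_le : m ≤ x + ↑(n + 1) := by push_cast; linarith [Nat.floor_le hx.le]
    have hle_m : x + ↑(n + 1) ≤ m + 1 := by push_cast; linarith [Nat.lt_floor_add_one x]
    have hfg_m : f m = g m := by
      have := shift 1 one_pos (⌊x⌋₊ + n)
      push_cast at this
      rw [show m = 1 + (⌊x⌋₊ + n) by ring]
      linarith
    have hf_lo := hf hm hxn hm_le
    have hf_hi := hf hxn (by positivity : 0 < m + 1) hle_m
    have hg_lo := hg hm hxn hm_le
    have hg_hi := hg hxn (by positivity : 0 < m + 1) hle_m
    rw [hfr m hm] at hf_hi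
    rw [hgr m hm] at hg_hi
    rw [← shift x hx (n + 1), abs_le]
    constructor <;> linarith
  have hr_seq : Tendsto (fun n : ℕ => r (⌊x⌋₊ + 1 + n)) atTop (𝓝 0) :=
    hr.comp (tendsto_atTop_add_const_left _ _ tendsto_natCast_atTop_atTop)
  exact sub_eq_zero.1 (abs_nonpos_iff.1 (ge_of_tendsto' hr_seq habs_le))

lemma logDeriv_Gamma_add_one {x : ℝ} (hx : 0 < x) :
    logDeriv Gamma (x + 1) = logDeriv Gamma x + 1 / x := by
  have hΓ : ∀ {y : ℝ}, 0 < y → DifferentiableAt ℝ Gamma y := fun hy =>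
    differentiableOn_Gamma_Ioi.differentiableAt (Ioi_mem_nhds hy)
  have hshift : (Gamma ∘ (· + 1)) =ᶠ[𝓝 x] fun y => y * Gamma y := by
    filter_upwards [Ioi_mem_nhds hx] with y (hy : 0 < y)
    exact Gamma_add_one hy.ne'
  have hcomp := logDeriv_comp (g := fun y : ℝ => y + 1) (x := x) (hΓ (by linarith))
    (differentiableAt_id.add_const 1)
  rw [deriv_add_const, deriv_id'', mul_one] at hcomp
  rw [← hcomp, (logDeriv_congr_nhds hshift).eq_of_nhds,
    logDeriv_mul (f := fun y => y) x hx.ne' (Gamma_pos_of_pos hx).ne' differentiableAt_id (hΓ hx),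
    logDeriv_id', add_comm]

lemma digamma_add_one {x : ℝ} (hx : 0 < x) : digamma (x + 1) = digamma x + 1 / x :=
  logDeriv_Gamma_add_one hx

lemma monotoneOn_digamma : MonotoneOn digamma (Ioi 0) := by
  have hdiff : ∀ x ∈ Ioi (0 : ℝ), DifferentiableAt ℝ Gamma x := fun x hx =>
    differentiableOn_Gamma_Ioi.differentiableAt (Ioi_mem_nhds hx)
  refine (convexOn_log_Gamma.monotoneOn_deriv fun x hx =>
    (hdiff x hx).log (Gamma_pos_of_pos hx).ne').congr fun x hx => ?_
  exact deriv_log_comp_eq_logDeriv (hdiff x hx) (Gamma_pos_of_pos hx).ne'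

lemma digamma_one : digamma 1 = -eulerMascheroniConstant := by
  rw [digamma, hasDerivAt_Gamma_one.deriv, Gamma_one, div_one]

noncomputable def digammaIntegrand (a t : ℝ) : ℝ := (exp (1 - 1 / t) - t ^ a) / (t * (1 - t))

lemma exp_one_sub_one_div_le {t : ℝ} (ht : 0 < t) : exp (1 - 1 / t) ≤ t := by
  rw [one_div, ← le_log_iff_exp_le ht]
  exact one_sub_inv_le_log_of_pos ht

lemma one_sub_rpow_le {a t : ℝ} (ha : 0 ≤ a) (ht : 0 < t) : 1 - t ^ a ≤ a * (1 / t - 1) := by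
  have hlog : 1 - 1 / t ≤ log t := by rw [one_div]; exact one_sub_inv_le_log_of_pos ht
  have hexp : a * log t + 1 ≤ t ^ a := by
    rw [rpow_def_of_pos ht, mul_comm]; exact add_one_le_exp _
  nlinarith

lemma abs_digammaIntegrand_le {a t : ℝ} (ha : 0 ≤ a) (ht0 : 0 < t) (ht1 : t ≤ 1) :
    |digammaIntegrand a t| ≤ 4 * (1 + a) + 2 * (1 + t ^ (a - 1)) := by
  have hbound_nonneg : 0 ≤ 4 * (1 + a) + 2 * (1 + t ^ (a - 1)) := by positivity
  rcases ht1.eq_or_lt with rfl | ht1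
  · simpa [digammaIntegrand] using hbound_nonneg
  have hden : 0 < t * (1 - t) := mul_pos ht0 (by linarith)
  have hexp_pos := exp_pos (1 - 1 / t)
  have hexp_le := exp_one_sub_one_div_le ht0
  have hrpow : t ^ a = t ^ (a - 1) * t := by rw [rpow_sub_one ht0.ne', div_mul_cancel₀ _ ht0.ne']
  have hrpow_pos : 0 < t ^ (a - 1) := rpow_pos_of_pos ht0 _
  rw [digammaIntegrand, abs_div, abs_of_pos hden, div_le_iff₀ hden]
  rcases le_or_gt t (1 / 2) with ht_small | ht_large
  · -- near `0` both terms of the numerator are small compared with `t`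
    calc |exp (1 - 1 / t) - t ^ a| ≤ t + t ^ (a - 1) * t := by
          rw [abs_le, ← hrpow]; constructor <;> nlinarith [rpow_pos_of_pos ht0 a]
      _ ≤ _ := by
          nlinarith [mul_nonneg (mul_nonneg (by positivity : 0 ≤ 1 + t ^ (a - 1)) ht0.le)
            (by linarith : 0 ≤ 1 - 2 * t), mul_nonneg (by positivity : 0 ≤ 1 + a) hden.le]
  · -- near `1` both terms of the numerator are `1 - O(1 - t)`
    have h1 : 1 - exp (1 - 1 / t) ≤ 1 / t - 1 := by linarith [add_one_le_exp (1 - 1 / t)]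
    have h2 := one_sub_rpow_le ha ht0
    have hexp_le_one : exp (1 - 1 / t) ≤ 1 := by linarith
    have hrpow_le_one : t ^ a ≤ 1 := rpow_le_one ht0.le ht1.le ha
    have hinv : 1 / t - 1 = (1 - t) / t := by field_simp
    have hinv_le : 1 / t ≤ 2 := by rw [div_le_iff₀ ht0]; linarith
    calc |exp (1 - 1 / t) - t ^ a| ≤ (1 + a) * (1 / t - 1) := by
          rw [abs_le]; constructor <;> nlinarith
      _ ≤ _ := by
          rw [hinv, mul_div_assoc', div_le_iff₀ ht0]
          nlinarith [mul_nonneg (mul_nonneg (by positivity : 0 ≤ 1 + a) (by linarith : 0 ≤ 1 - t))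
            (by nlinarith : 0 ≤ 4 * t ^ 2 - 1),
            mul_nonneg (by positivity : 0 ≤ 1 + t ^ (a - 1)) (mul_nonneg hden.le ht0.le)]

lemma intervalIntegrable_digammaIntegrand {a : ℝ} (ha : 0 < a) :
    IntervalIntegrable (digammaIntegrand a) volume 0 1 := by
  refine IntervalIntegrable.mono_fun' (g := fun t => 4 * (1 + a) + 2 * (1 + t ^ (a - 1)))
    (intervalIntegrable_const.add
      ((intervalIntegrable_const.add (intervalIntegrable_rpow' (by linarith))).const_mul 2))
    (by unfold digammaIntegrand; exact (by fun_prop : Measurable _).aestronglyMeasurable) ?_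
  rw [uIoc_of_le zero_le_one]
  filter_upwards [self_mem_ae_restrict measurableSet_Ioc] with t ht
  exact abs_digammaIntegrand_le ha.le ht.1 ht.2

lemma monotoneOn_integral_digammaIntegrand :
    MonotoneOn (fun a => ∫ t in (0 : ℝ)..1, digammaIntegrand a t) (Ioi 0) := by
  intro x (hx : 0 < x) y (hy : 0 < y) hxy
  refine integral_mono_on_of_le_Ioo zero_le_one (intervalIntegrable_digammaIntegrand hx)
    (intervalIntegrable_digammaIntegrand hy) fun t ⟨ht0, ht1⟩ => ?_
  have : t ^ y ≤ t ^ x := rpow_le_rpow_of_exponent_ge ht0 ht1.le hxy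
  have : 0 < t * (1 - t) := mul_pos ht0 (by linarith)
  unfold digammaIntegrand
  gcongr

lemma integral_digammaIntegrand_add_one {a : ℝ} (ha : 0 < a) :
    ∫ t in (0 : ℝ)..1, digammaIntegrand (a + 1) t =
      (∫ t in (0 : ℝ)..1, digammaIntegrand a t) + 1 / a := by
  have hpow : EqOn (digammaIntegrand (a + 1)) (fun t => digammaIntegrand a t + t ^ (a - 1))
      (Ioo 0 1) := by
    intro t ⟨ht0, ht1⟩
    have hden : t * (1 - t) ≠ 0 := (mul_pos ht0 (by linarith)).ne'
    simp only [digammaIntegrand]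
    rw [div_add' _ _ _ hden, rpow_add_one ht0.ne', rpow_sub_one ht0.ne']
    field_simp
    ring
  rw [integral_congr_Ioo_of_le zero_le_one hpow,
    integral_add (intervalIntegrable_digammaIntegrand ha) (intervalIntegrable_rpow' (by linarith)),
    integral_rpow (Or.inl (by linarith))]
  simp [ha.ne']

section Frullani

variable {a b : ℝ}

lemma exp_mul_one_sub_one_div_div_sq_le {s t : ℝ} (hs : 0 < s) (ht : 0 < t) :
    exp (s * (1 - 1 / t)) / t ^ 2 ≤ 2 * exp s / s ^ 2 := by
  have hquad : (s / t) ^ 2 / 2 ≤ exp (s / t) := by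
    simpa using pow_div_factorial_le_exp (s / t) (by positivity) 2
  have hsplit : exp (s * (1 - 1 / t)) = exp s / exp (s / t) := by
    rw [← exp_sub]; ring_nf
  rw [hsplit, div_div, div_le_div_iff₀ (by positivity) (by positivity)]
  have : s ^ 2 ≤ 2 * (exp (s / t) * t ^ 2) := by
    rw [div_pow, div_div, div_le_iff₀ (by positivity)] at hquad
    linarith
  nlinarith [exp_pos s]

lemma intervalIntegrable_exp_mul_one_sub_one_div_div_sq {s : ℝ} (hs : 0 < s) :
    IntervalIntegrable (fun t => exp (s * (1 - 1 / t)) / t ^ 2) volume 0 1 := by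
  refine IntervalIntegrable.mono_fun' (g := fun _ => 2 * exp s / s ^ 2) intervalIntegrable_const
    (by fun_prop : Measurable _).aestronglyMeasurable ?_
  rw [uIoc_of_le zero_le_one]
  filter_upwards [self_mem_ae_restrict measurableSet_Ioc] with t ht
  rw [norm_of_nonneg (by positivity)]
  exact exp_mul_one_sub_one_div_div_sq_le hs ht.1

lemma integral_exp_mul_one_sub_one_div_div_sq {s : ℝ} (hs : 0 < s) :
    ∫ t in (0 : ℝ)..1, exp (s * (1 - 1 / t)) / t ^ 2 = 1 / s := by
  have hderiv : ∀ t ∈ Ioo (0 : ℝ) 1,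
      HasDerivAt (fun t => exp (s * (1 - 1 / t)) / s) (exp (s * (1 - 1 / t)) / t ^ 2) t := by
    intro t ⟨ht0, _⟩
    have hinner : HasDerivAt (fun t => s * (1 - 1 / t)) (s * (t ^ 2)⁻¹) t := by
      simpa [one_div] using ((hasDerivAt_inv ht0.ne').const_sub 1).const_mul s
    exact (hinner.exp.div_const s).congr_deriv (by field_simp)
  have hzero : Tendsto (fun t => exp (s * (1 - 1 / t)) / s) (𝓝[>] 0) (𝓝 0) := by
    have : Tendsto (fun t : ℝ => s * (1 - 1 / t)) (𝓝[>] 0) atBot := by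
      simp only [one_div]
      exact (tendsto_atBot_add_const_left _ 1 (tendsto_neg_atTop_atBot.comp
        tendsto_inv_nhdsGT_zero)).const_mul_atBot hs
    simpa using (tendsto_exp_atBot.comp this).div_const s
  have hone : Tendsto (fun t => exp (s * (1 - 1 / t)) / s) (𝓝[<] 1) (𝓝 (1 / s)) := by
    have hcont : ContinuousAt (fun t => exp (s * (1 - 1 / t)) / s) 1 := by
      fun_prop (disch := simp [hs.ne'])
    simpa using hcont.tendsto.mono_left nhdsWithin_le_nhds
  rw [integral_eq_sub_of_hasDerivAt_of_tendsto zero_lt_one hderiv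
    (intervalIntegrable_exp_mul_one_sub_one_div_div_sq hs) hzero hone, sub_zero]

lemma exp_mul_sub_exp_mul_div_eq_integral {t : ℝ} (ht0 : 0 < t) (ht1 : t < 1) :
    (exp (a * (1 - 1 / t)) - exp (b * (1 - 1 / t))) / (t * (1 - t)) =
      ∫ s in a..b, exp (s * (1 - 1 / t)) / t ^ 2 := by
  have hc : 1 - 1 / t ≠ 0 := by
    rw [sub_ne_zero, ne_comm, one_div, inv_ne_one]; exact ht1.ne
  rw [intervalIntegral.integral_div, integral_comp_mul_right (fun s => exp s) hc, integral_exp,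
    smul_eq_mul]
  set c := 1 - 1 / t
  have hct : c * t = -(1 - t) := by simp only [c]; field_simp; ring
  have : 1 - t ≠ 0 := by linarith
  rw [mul_comm b c, mul_comm a c]
  field_simp
  linear_combination (exp (c * a) - exp (c * b)) * hct

lemma integrable_exp_mul_one_sub_one_div_div_sq_prod (ha : 0 < a) :
    Integrable (Function.uncurry fun t s => exp (s * (1 - 1 / t)) / t ^ 2)
      ((volume.restrict (Ioo 0 1)).prod (volume.restrict (Ioc a b))) := by
  refine Integrable.of_bound (by fun_prop : Measurable _).aestronglyMeasurable
    (2 * exp b / a ^ 2) ?_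
  rw [Measure.prod_restrict]
  filter_upwards [self_mem_ae_restrict (measurableSet_Ioo.prod measurableSet_Ioc)]
    with ⟨t, s⟩ ⟨⟨ht0, _⟩, hsa, hsb⟩
  have hs : 0 < s := ha.trans hsa
  rw [Function.uncurry_apply_pair, norm_of_nonneg (by positivity)]
  calc exp (s * (1 - 1 / t)) / t ^ 2 ≤ 2 * exp s / s ^ 2 :=
        exp_mul_one_sub_one_div_div_sq_le hs ht0
    _ ≤ 2 * exp b / a ^ 2 := by gcongr

lemma intervalIntegrable_exp_mul_sub_exp_mul_div (ha : 0 < a) (hab : a ≤ b) :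
    IntervalIntegrable (fun t => (exp (a * (1 - 1 / t)) - exp (b * (1 - 1 / t))) / (t * (1 - t)))
      volume 0 1 := by
  rw [intervalIntegrable_iff_integrableOn_Ioo_of_le zero_le_one]
  refine (integrable_exp_mul_one_sub_one_div_div_sq_prod (b := b) ha).integral_prod_left.congr ?_
  filter_upwards [self_mem_ae_restrict measurableSet_Ioo] with t ⟨ht0, ht1⟩
  rw [exp_mul_sub_exp_mul_div_eq_integral ht0 ht1, integral_of_le hab]
  rfl

/-- Frullani's integral `∫₀^∞ (e^{-a u} - e^{-b u}) / u du = log (b / a)`, written in the variable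
`t = 1 / (1 + u)`. -/
theorem integral_exp_mul_sub_exp_mul_div_eq_log (ha : 0 < a) (hab : a ≤ b) :
    ∫ t in (0 : ℝ)..1, (exp (a * (1 - 1 / t)) - exp (b * (1 - 1 / t))) / (t * (1 - t)) =
      log (b / a) := by
  have hswap := integral_integral_swap (integrable_exp_mul_one_sub_one_div_div_sq_prod (b := b) ha)
  rw [integral_congr_Ioo_of_le zero_le_one fun t ht =>
      exp_mul_sub_exp_mul_div_eq_integral ht.1 ht.2,
    integral_of_le zero_le_one, integral_Ioc_eq_integral_Ioo]
  simp only [integral_of_le hab]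
  rw [hswap, setIntegral_congr_fun measurableSet_Ioc (g := fun s => s⁻¹) fun s hs => ?_,
    ← integral_of_le hab, integral_inv_of_pos ha (ha.trans_le hab)]
  rw [← integral_Ioc_eq_integral_Ioo, ← integral_of_le zero_le_one,
    integral_exp_mul_one_sub_one_div_div_sq (ha.trans hs.1), one_div]

end Frullani

lemma rpow_sub_exp_mul_div_nonneg {b t : ℝ} (hb : 0 ≤ b) (ht0 : 0 < t) (ht1 : t < 1) :
    0 ≤ (t ^ b - exp (b * (1 - 1 / t))) / (t * (1 - t)) := by
  have hlog : 1 - 1 / t ≤ log t := by rw [one_div]; exact one_sub_inv_le_log_of_pos ht0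
  have : exp (b * (1 - 1 / t)) ≤ t ^ b := by
    rw [rpow_def_of_pos ht0, mul_comm (log t)]
    exact exp_le_exp.2 (mul_le_mul_of_nonneg_left hlog hb)
  exact div_nonneg (by linarith) (mul_pos ht0 (by linarith)).le

lemma rpow_sub_exp_mul_div_le {b t : ℝ} (hb : 0 ≤ b) (ht0 : 0 < t) (ht1 : t < 1) :
    (t ^ b - exp (b * (1 - 1 / t))) / (t * (1 - t)) ≤ b * (t ^ (b - 2) - t ^ (b - 1)) := by
  have hpow : t ^ b = exp (b * log t) := by rw [rpow_def_of_pos ht0, mul_comm]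
  have hpow_pos : 0 < t ^ b := rpow_pos_of_pos ht0 b
  -- `e^x - e^y ≤ e^x (x - y)`, then `log t - (1 - 1/t) ≤ (t - 1) - (1 - 1/t)`
  have hmvt : t ^ b - exp (b * (1 - 1 / t)) ≤ t ^ b * (b * log t - b * (1 - 1 / t)) := by
    have h := add_one_le_exp (b * (1 - 1 / t) - b * log t)
    rw [exp_sub, ← hpow, le_div_iff₀ hpow_pos] at h
    linarith
  have hlog : b * log t ≤ b * (t - 1) := mul_le_mul_of_nonneg_left (log_le_sub_one_of_pos ht0) hb
  have hden : 0 < t * (1 - t) := mul_pos ht0 (by linarith)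
  have hrhs : b * (t ^ (b - 2) - t ^ (b - 1)) * (t * (1 - t)) =
      t ^ b * (b * (t - 1) - b * (1 - 1 / t)) := by
    rw [rpow_sub ht0, rpow_sub_one ht0.ne', rpow_two]
    field_simp
    ring
  rw [div_le_iff₀ hden, hrhs]
  nlinarith

lemma integral_mul_rpow_sub_rpow {b : ℝ} (hb : 1 < b) :
    ∫ t in (0 : ℝ)..1, b * (t ^ (b - 2) - t ^ (b - 1)) = 1 / (b - 1) := by
  rw [intervalIntegral.integral_const_mul, integral_sub (intervalIntegrable_rpow' (by linarith))
    (intervalIntegrable_rpow' (by linarith)), integral_rpow (Or.inl (by linarith)),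
    integral_rpow (Or.inl (by linarith))]
  have : b - 1 ≠ 0 := by linarith
  have : b ≠ 0 := by linarith
  rw [show b - 2 + 1 = b - 1 by ring, sub_add_cancel, one_rpow, one_rpow, zero_rpow ‹_›,
    zero_rpow ‹_›]
  field_simp
  ring

lemma abs_integral_digammaIntegrand_sub_log_le {b : ℝ} (hb : 1 < b) :
    |(∫ t in (0 : ℝ)..1, digammaIntegrand b t) - log b| ≤ 1 / (b - 1) := by
  have hfrullani := integral_exp_mul_sub_exp_mul_div_eq_log one_pos hb.le
  have hG := intervalIntegrable_exp_mul_sub_exp_mul_div one_pos hb.le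
  have hφ := intervalIntegrable_digammaIntegrand (zero_lt_one.trans hb)
  simp only [one_mul, div_one] at hfrullani hG
  have herror : (fun t => (t ^ b - exp (b * (1 - 1 / t))) / (t * (1 - t))) =
      fun t => (exp (1 - 1 / t) - exp (b * (1 - 1 / t))) / (t * (1 - t)) -
        digammaIntegrand b t := by
    funext t; simp only [digammaIntegrand]; ring
  have hP := hG.sub hφ
  rw [← herror] at hP
  have hlog_sub : log b - ∫ t in (0 : ℝ)..1, digammaIntegrand b t =
      ∫ t in (0 : ℝ)..1, (t ^ b - exp (b * (1 - 1 / t))) / (t * (1 - t)) := by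
    rw [herror, integral_sub hG hφ, hfrullani]
  have hlo : 0 ≤ ∫ t in (0 : ℝ)..1, (t ^ b - exp (b * (1 - 1 / t))) / (t * (1 - t)) := by
    simpa using integral_mono_on_of_le_Ioo zero_le_one intervalIntegrable_const hP
      fun t ht => rpow_sub_exp_mul_div_nonneg (by linarith) ht.1 ht.2
  have hhi := integral_mono_on_of_le_Ioo zero_le_one hP
    ((intervalIntegrable_rpow' (by linarith)).sub (intervalIntegrable_rpow' (by linarith))
      |>.const_mul b)
    fun t ht => rpow_sub_exp_mul_div_le (by linarith) ht.1 ht.2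
  rw [integral_mul_rpow_sub_rpow hb] at hhi
  rw [abs_sub_comm, abs_of_nonneg (by linarith)]
  linarith

lemma tendsto_integral_digammaIntegrand_sub_log :
    Tendsto (fun b => (∫ t in (0 : ℝ)..1, digammaIntegrand b t) - log b) atTop (𝓝 0) := by
  have hbound : Tendsto (fun b : ℝ => 1 / (b - 1)) atTop (𝓝 0) :=
    tendsto_const_nhds.div_atTop (tendsto_atTop_add_const_right _ (-1) tendsto_id)
  refine squeeze_zero_norm' ?_ hbound
  filter_upwards [eventually_gt_atTop 1] with b hb
  exact abs_integral_digammaIntegrand_sub_log_le hb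

lemma integral_digammaIntegrand_one :
    ∫ t in (0 : ℝ)..1, digammaIntegrand 1 t = -eulerMascheroniConstant := by
  set F := fun a => ∫ t in (0 : ℝ)..1, digammaIntegrand a t
  have hharmonic : ∀ n : ℕ, F (n + 1) = F 1 + harmonic n := by
    intro n
    induction n with
    | zero => simp
    | succ n ih =>
      rw [Nat.cast_succ, show F (n + 1 + 1) = F (n + 1) + 1 / (n + 1) from
        integral_digammaIntegrand_add_one (by positivity), ih, harmonic_succ]
      push_cast
      ring
  have hzero : Tendsto (fun n : ℕ => F (n + 1) - log (n + 1)) atTop (𝓝 0) :=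
    tendsto_integral_digammaIntegrand_sub_log.comp
      (tendsto_atTop_add_const_right _ 1 tendsto_natCast_atTop_atTop)
  have hγ : Tendsto (fun n : ℕ => F (n + 1) - log (n + 1)) atTop
      (𝓝 (F 1 + eulerMascheroniConstant)) := by
    simp_rw [hharmonic, add_sub_assoc]
    exact tendsto_harmonic_sub_log_add_one.const_add _
  linarith [tendsto_nhds_unique hzero hγ]

theorem integral_exp_sub_rpow_unit_interval_eq_digamma (a : ℝ) (ha : 0 < a) :
    ∫ t in (0 : ℝ)..1, (Real.exp (1 - 1 / t) - t ^ a) / (t * (1 - t)) = digamma a :=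
  eqOn_Ioi_of_monotoneOn_of_add_one monotoneOn_integral_digammaIntegrand monotoneOn_digamma
    (fun _ hx => integral_digammaIntegrand_add_one hx) (fun _ hx => digamma_add_one hx)
    (tendsto_const_nhds.div_atTop tendsto_id)
    (by rw [integral_digammaIntegrand_one, digamma_one]) ha
end

section
/- For all real numbers p > 0 and q > 0, ∫_0^∞ (e^{-x^p} - e^{-x^q}) dx/x = ((p - q)/(p q)) · γ. -/
/-! Integrate by parts against `log x`: the boundary term `log x * (exp (-x ^ p) - exp (-x ^ q))`
vanishes at `0` and at `∞`, so the integral equals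
`∫ log x * (p * x ^ (p - 1) * exp (-x ^ p) - q * x ^ (q - 1) * exp (-x ^ q)) dx`. The substitution
`u = x ^ s` turns `∫ log x * s * x ^ (s - 1) * exp (-x ^ s) dx` into
`s⁻¹ * ∫ log u * exp (-u) du = s⁻¹ * Γ'(1) = -γ / s`. -/

open MeasureTheory Real

open Set Filter Topology Asymptotics

lemma integral_log_mul_exp_neg :
    ∫ u in Ioi (0 : ℝ), log u * exp (-u) = -eulerMascheroniConstant := by
  have hderiv_integral : HasDerivAt Complex.GammaIntegral
      (∫ t : ℝ in Ioi 0, (t : ℂ) ^ ((1 : ℂ) - 1) * (log t * exp (-t))) 1 :=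
    Complex.hasDerivAt_GammaIntegral (by norm_num)
  have hderiv_Gamma : HasDerivAt Complex.GammaIntegral (-(eulerMascheroniConstant : ℂ)) 1 := by
    refine Complex.hasDerivAt_Gamma_one.congr_of_eventuallyEq ?_
    filter_upwards [(isOpen_lt continuous_const Complex.continuous_re).mem_nhds
      (by norm_num : (0 : ℝ) < (1 : ℂ).re)] with s hs
    exact (Complex.Gamma_eq_integral hs).symm
  have h := hderiv_integral.unique hderiv_Gamma
  simp only [sub_self, Complex.cpow_zero, one_mul] at h
  have hcast :
      ((∫ u in Ioi (0 : ℝ), log u * exp (-u) : ℝ) : ℂ) = -eulerMascheroniConstant := by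
    rw [← integral_complex_ofReal]
    simpa only [Complex.ofReal_mul] using h
  exact_mod_cast hcast

lemma integrableOn_log_mul_exp_neg : IntegrableOn (fun u => log u * exp (-u)) (Ioi 0) :=
  Integrable.of_integral_ne_zero <| by
    rw [integral_log_mul_exp_neg, neg_ne_zero]
    exact (one_half_pos.trans one_half_lt_eulerMascheroniConstant).ne'

section

variable {s : ℝ}

lemma log_mul_rpow_mul_exp_neg_rpow_eq_smul (hs : s ≠ 0) {x : ℝ} (hx : 0 < x) :
    log x * (s * x ^ (s - 1) * exp (-x ^ s))
      = (s * x ^ (s - 1)) • (log (x ^ s) * exp (-x ^ s) / s) := by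
  rw [smul_eq_mul, log_rpow hx]
  field_simp

lemma integrableOn_log_mul_rpow_mul_exp_neg_rpow (hs : 0 < s) :
    IntegrableOn (fun x => log x * (s * x ^ (s - 1) * exp (-x ^ s))) (Ioi 0) := by
  have := (integrableOn_Ioi_comp_rpow_iff (fun u => log u * exp (-u) / s) hs.ne').2
    (integrableOn_log_mul_exp_neg.div_const s)
  refine this.congr_fun (fun x hx => ?_) measurableSet_Ioi
  rw [abs_of_pos hs, log_mul_rpow_mul_exp_neg_rpow_eq_smul hs.ne' hx]

lemma integral_log_mul_rpow_mul_exp_neg_rpow (hs : 0 < s) :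
    ∫ x in Ioi 0, log x * (s * x ^ (s - 1) * exp (-x ^ s)) = -eulerMascheroniConstant / s := by
  have := integral_comp_rpow_Ioi_of_pos (g := fun u => log u * exp (-u) / s) hs
  rw [integral_div, integral_log_mul_exp_neg] at this
  rw [← this]
  exact setIntegral_congr_fun measurableSet_Ioi fun x hx =>
    log_mul_rpow_mul_exp_neg_rpow_eq_smul hs.ne' hx

lemma hasDerivAt_exp_neg_rpow {x : ℝ} (hx : 0 < x) :
    HasDerivAt (fun x => exp (-x ^ s)) (-(s * x ^ (s - 1) * exp (-x ^ s))) x := by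
  convert ((hasDerivAt_rpow_const (p := s) (Or.inl hx.ne')).fun_neg.exp) using 1
  ring

lemma abs_exp_neg_rpow_sub_one_le {x : ℝ} (hx : 0 < x) : |exp (-x ^ s) - 1| ≤ x ^ s := by
  have hxs := rpow_pos_of_pos hx s
  rw [abs_of_nonpos (by simpa using hxs.le), neg_sub]
  linarith [add_one_le_exp (-x ^ s)]

lemma tendsto_log_mul_exp_neg_rpow_sub_one_nhdsGT_zero (hs : 0 < s) :
    Tendsto (fun x => log x * (exp (-x ^ s) - 1)) (𝓝[>] 0) (𝓝 0) := by
  have hlim := (tendsto_log_mul_rpow_nhdsGT_zero hs).norm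
  rw [norm_zero] at hlim
  refine squeeze_zero_norm' ?_ hlim
  filter_upwards [self_mem_nhdsWithin] with x hx
  rw [norm_mul, norm_mul, norm_of_nonneg (rpow_pos_of_pos hx s).le]
  exact mul_le_mul_of_nonneg_left (abs_exp_neg_rpow_sub_one_le hx) (norm_nonneg _)

lemma tendsto_log_mul_exp_neg_rpow_atTop (hs : 0 < s) :
    Tendsto (fun x => log x * exp (-x ^ s)) atTop (𝓝 0) := by
  have hu : Tendsto (fun u => log u * exp (-u)) atTop (𝓝 0) :=
    (isLittleO_log_id_atTop.mul_isBigO (isBigO_refl (fun u => exp (-u)) atTop)).trans_tendsto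
      (by simpa using tendsto_pow_mul_exp_neg_atTop_nhds_zero 1)
  have := (hu.comp (tendsto_rpow_atTop hs)).div_const s
  rw [zero_div] at this
  refine this.congr' ?_
  filter_upwards [eventually_gt_atTop 0] with x hx
  simp only [Function.comp_apply, log_rpow hx]
  field_simp

lemma integrableOn_inv_mul_exp_neg_rpow_sub_one (hs : 0 < s) :
    IntegrableOn (fun x => x⁻¹ * (exp (-x ^ s) - 1)) (Ioc 0 1) := by
  have hmaj : IntegrableOn (fun x : ℝ => x ^ (s - 1)) (Ioc 0 1) :=
    (intervalIntegrable_iff_integrableOn_Ioc_of_le zero_le_one).1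
      (intervalIntegral.intervalIntegrable_rpow' (by linarith))
  refine hmaj.mono' (by fun_prop) ?_
  rw [ae_restrict_iff' measurableSet_Ioc]
  filter_upwards with x hx
  rw [norm_mul, norm_inv, norm_of_nonneg hx.1.le, rpow_sub_one hx.1.ne', div_eq_inv_mul]
  exact mul_le_mul_of_nonneg_left (abs_exp_neg_rpow_sub_one_le hx.1) (inv_nonneg.2 hx.1.le)

lemma integrableOn_inv_mul_exp_neg_rpow (hs : 0 < s) :
    IntegrableOn (fun x => x⁻¹ * exp (-x ^ s)) (Ioi 1) := by
  have hmaj : IntegrableOn (fun x : ℝ => x ^ (0 : ℝ) * exp (-x ^ s)) (Ioi 1) :=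
    (integrableOn_rpow_mul_exp_neg_rpow (by norm_num) hs).mono_set (Ioi_subset_Ioi zero_le_one)
  refine hmaj.mono' (by fun_prop) ?_
  rw [ae_restrict_iff' measurableSet_Ioi]
  filter_upwards with x (hx : 1 < x)
  rw [norm_mul, norm_inv, norm_of_nonneg (zero_le_one.trans hx.le), norm_of_nonneg (exp_pos _).le,
    rpow_zero]
  exact mul_le_mul_of_nonneg_right (inv_le_one_of_one_le₀ hx.le) (exp_pos _).le

end

section

variable {p q : ℝ}

lemma tendsto_log_mul_exp_neg_rpow_sub_exp_neg_rpow_nhdsGT_zero (hp : 0 < p) (hq : 0 < q) :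
    Tendsto (fun x => log x * (exp (-x ^ p) - exp (-x ^ q))) (𝓝[>] 0) (𝓝 0) := by
  have := (tendsto_log_mul_exp_neg_rpow_sub_one_nhdsGT_zero hp).sub
    (tendsto_log_mul_exp_neg_rpow_sub_one_nhdsGT_zero hq)
  rw [sub_zero] at this
  exact this.congr fun x => by ring

lemma tendsto_log_mul_exp_neg_rpow_sub_exp_neg_rpow_atTop (hp : 0 < p) (hq : 0 < q) :
    Tendsto (fun x => log x * (exp (-x ^ p) - exp (-x ^ q))) atTop (𝓝 0) := by
  have := (tendsto_log_mul_exp_neg_rpow_atTop hp).sub (tendsto_log_mul_exp_neg_rpow_atTop hq)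
  rw [sub_zero] at this
  exact this.congr fun x => by ring

lemma integrableOn_inv_mul_exp_neg_rpow_sub_exp_neg_rpow (hp : 0 < p) (hq : 0 < q) :
    IntegrableOn (fun x => x⁻¹ * (exp (-x ^ p) - exp (-x ^ q))) (Ioi 0) := by
  rw [← Ioc_union_Ioi_eq_Ioi zero_le_one]
  refine IntegrableOn.union ?_ ?_
  · refine ((integrableOn_inv_mul_exp_neg_rpow_sub_one hp).sub
      (integrableOn_inv_mul_exp_neg_rpow_sub_one hq)).congr_fun (fun x _ => ?_) measurableSet_Ioc
    simp only [Pi.sub_apply]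
    ring
  · exact ((integrableOn_inv_mul_exp_neg_rpow hp).sub
      (integrableOn_inv_mul_exp_neg_rpow hq)).congr_fun (fun x _ => (mul_sub _ _ _).symm)
      measurableSet_Ioi

end

theorem integral_exp_rpow_sub_exp_rpow_div (p q : ℝ) (hp : 0 < p) (hq : 0 < q) :
    ∫ x in Set.Ioi (0 : ℝ), (Real.exp (-(x ^ p)) - Real.exp (-(x ^ q))) / x
      = ((p - q) / (p * q)) * Real.eulerMascheroniConstant := by
  set v : ℝ → ℝ := fun x => exp (-x ^ p) - exp (-x ^ q)
  set D : ℝ → ℝ → ℝ := fun s x => s * x ^ (s - 1) * exp (-x ^ s)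
  have hv : ∀ x ∈ Ioi (0 : ℝ), HasDerivAt v (-D p x - -D q x) x := fun x hx =>
    (hasDerivAt_exp_neg_rpow hx).sub (hasDerivAt_exp_neg_rpow hx)
  have hlog_v : IntegrableOn (log * fun x => -D p x - -D q x) (Ioi 0) :=
    ((integrableOn_log_mul_rpow_mul_exp_neg_rpow hq).sub
      (integrableOn_log_mul_rpow_mul_exp_neg_rpow hp)).congr_fun
      (fun x _ => by simp only [Pi.sub_apply, Pi.mul_apply]; ring) measurableSet_Ioi
  have hibp := integral_Ioi_mul_deriv_eq_deriv_mul (fun x hx => hasDerivAt_log (ne_of_gt hx)) hv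
    hlog_v (integrableOn_inv_mul_exp_neg_rpow_sub_exp_neg_rpow hp hq)
    (tendsto_log_mul_exp_neg_rpow_sub_exp_neg_rpow_nhdsGT_zero hp hq)
    (tendsto_log_mul_exp_neg_rpow_sub_exp_neg_rpow_atTop hp hq)
  calc ∫ x in Ioi (0 : ℝ), (exp (-x ^ p) - exp (-x ^ q)) / x
      = -∫ x in Ioi (0 : ℝ), log x * (-D p x - -D q x) := by
        rw [hibp]
        simp only [v, div_eq_inv_mul]
        ring
    _ = (∫ x in Ioi (0 : ℝ), log x * D p x) - ∫ x in Ioi (0 : ℝ), log x * D q x := by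
        rw [← integral_sub (integrableOn_log_mul_rpow_mul_exp_neg_rpow hp)
          (integrableOn_log_mul_rpow_mul_exp_neg_rpow hq), ← integral_neg]
        congr 1 with x
        ring
    _ = ((p - q) / (p * q)) * eulerMascheroniConstant := by
        rw [integral_log_mul_rpow_mul_exp_neg_rpow hp, integral_log_mul_rpow_mul_exp_neg_rpow hq]
        field_simp
        ring
end

section
/- Let p, q, r, s be real numbers with s < r, p < r and q < r. Then ∫_0^∞ (e^{px} - e^{qx})/(e^{rx} - e^{sx}) dx = (1/(r-s)) · ( ψ((r-q)/(r-s)) - ψ((r-p)/(r-s)) ). -/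
open MeasureTheory Real

namespace DigammaAux

open Set Filter Topology

noncomputable def f : ℝ → ℝ := Real.log ∘ Real.Gamma

lemma hder {x : ℝ} (hx : 0 < x) : DifferentiableAt ℝ f x := by
  refine (Real.differentiableAt_Gamma ?_).log (Real.Gamma_ne_zero ?_) <;>
    exact fun m => ne_of_gt (lt_of_le_of_lt (neg_nonpos.mpr m.cast_nonneg) hx)

lemma deriv_f_eq {x : ℝ} (hx : 0 < x) : deriv f x = digamma x := by
  rw [f, Function.comp_def,
    deriv.log (Real.differentiableAt_Gamma fun m =>
        ne_of_gt (lt_of_le_of_lt (neg_nonpos.mpr m.cast_nonneg) hx))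
      (Real.Gamma_pos_of_pos hx).ne', digamma]

lemma hrec {x : ℝ} (hx : 0 < x) : f (x + 1) = f x + Real.log x := by
  simp only [f, Function.comp_apply, Real.Gamma_add_one hx.ne',
    Real.log_mul hx.ne' (Real.Gamma_pos_of_pos hx).ne', add_comm]

lemma hder_rec {x : ℝ} (hx : 0 < x) : deriv f (x + 1) = deriv f x + 1 / x := by
  rw [← deriv_comp_add_const, one_div, ← Real.deriv_log,
    ← deriv_add (hder hx) (Real.differentiableAt_log hx.ne')]
  apply Filter.EventuallyEq.deriv_eq
  filter_upwards [eventually_gt_nhds hx] with y hy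
  exact hrec hy

lemma hder_nat {x : ℝ} (hx : 0 < x) (n : ℕ) :
    deriv f (x + n) = deriv f x + ∑ k ∈ Finset.range n, 1 / (x + k) := by
  induction n with
  | zero => simp
  | succ n ih =>
    have h1 : x + ((n : ℝ) + 1) = (x + n) + 1 := by ring
    have h2 : 0 < x + (n : ℝ) := add_pos_of_pos_of_nonneg hx n.cast_nonneg
    rw [Nat.cast_succ, h1, hder_rec h2, ih, Finset.sum_range_succ, add_assoc]

lemma deriv_f_lb {x : ℝ} (hx : 0 < x) : Real.log x ≤ deriv f (x + 1) := by
  refine (le_of_eq ?_).trans <|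
    (Real.convexOn_log_Gamma).slope_le_deriv (mem_Ioi.mpr hx)
      (mem_Ioi.mpr (by linarith)) (by linarith) (hder (by linarith))
  rw [slope_def_field]
  show Real.log x = (f (x + 1) - f x) / (x + 1 - x)
  rw [hrec hx, show x + 1 - x = (1 : ℝ) by ring, div_one]
  ring

lemma deriv_f_ub {x : ℝ} (hx : 0 < x) : deriv f (x + 1) ≤ Real.log (x + 1) := by
  refine ((Real.convexOn_log_Gamma).deriv_le_slope (mem_Ioi.mpr (by linarith : (0:ℝ) < x + 1))
    (mem_Ioi.mpr (by linarith : (0:ℝ) < x + 2)) (by linarith) (hder (by linarith))).trans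
    (le_of_eq ?_)
  rw [slope_def_field]
  show (f (x + 2) - f (x + 1)) / (x + 2 - (x + 1)) = Real.log (x + 1)
  rw [show x + 2 = (x + 1) + 1 by ring, hrec (by linarith : (0:ℝ) < x + 1),
    show x + 1 + 1 - (x + 1) = (1 : ℝ) by ring, div_one]
  ring

lemma deriv_f_mono : MonotoneOn (deriv f) (Set.Ioi 0) :=
  (Real.convexOn_log_Gamma).monotoneOn_deriv fun _ hy => hder hy

lemma hasSum_aux {a b : ℝ} (ha : 0 < a) (hab : a ≤ b) :
    HasSum (fun n : ℕ => 1 / (a + n) - 1 / (b + n)) (deriv f b - deriv f a) := by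
  have hb : 0 < b := ha.trans_le hab
  have hpos : ∀ (x : ℝ), 0 < x → ∀ n : ℕ, 0 < x + n :=
    fun x hx n => add_pos_of_pos_of_nonneg hx n.cast_nonneg
  have hnonneg : ∀ n : ℕ, 0 ≤ 1 / (a + n) - 1 / (b + n) := by
    intro n
    have h1 := hpos a ha n
    have : 1 / (b + n) ≤ 1 / (a + n) := one_div_le_one_div_of_le h1 (by linarith)
    linarith
  rw [hasSum_iff_tendsto_nat_of_nonneg hnonneg]
  have key : ∀ n : ℕ, ∑ i ∈ Finset.range n, (1 / (a + i) - 1 / (b + i))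
      = (deriv f b - deriv f a) + (deriv f (a + n) - deriv f (b + n)) := by
    intro n
    have ha' := hder_nat ha n
    have hb' := hder_nat hb n
    rw [Finset.sum_sub_distrib]
    linarith
  simp only [key]
  have htail : Tendsto (fun n : ℕ => deriv f (a + n) - deriv f (b + n)) atTop (𝓝 0) := by
    have hub : ∀ᶠ n : ℕ in atTop, deriv f (a + n) - deriv f (b + n) ≤ 0 := by
      filter_upwards with n
      have := deriv_f_mono (mem_Ioi.mpr (hpos a ha n)) (mem_Ioi.mpr (hpos b hb n))
        (by have : a ≤ b := hab; linarith)
      linarith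
    have hlb : ∀ᶠ n : ℕ in atTop,
        Real.log (a + n - 1) - Real.log (b + n) ≤ deriv f (a + n) - deriv f (b + n) := by
      filter_upwards [eventually_ge_atTop 1] with n hn
      have hn1 : (1 : ℝ) ≤ n := mod_cast hn
      have h1 : 0 < a + n - 1 := by linarith
      have l1 : Real.log (a + n - 1) ≤ deriv f (a + n) := by
        have := deriv_f_lb h1
        rwa [show a + n - 1 + 1 = a + n by ring] at this
      have l2 : deriv f (b + n) ≤ Real.log (b + n) := by
        have h2 : 0 < b + n - 1 := by linarith
        have := deriv_f_ub h2
        rwa [show b + n - 1 + 1 = b + n by ring] at this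
      linarith
    have hlog : Tendsto (fun n : ℕ => Real.log (a + n - 1) - Real.log (b + n)) atTop (𝓝 0) := by
      have hratio : Tendsto (fun n : ℕ => (a + n - 1) / (b + n)) atTop (𝓝 1) := by
        have h0 : Tendsto (fun n : ℕ => (a - 1 - b) / (b + n)) atTop (𝓝 0) := by
          apply Tendsto.div_atTop tendsto_const_nhds
          exact tendsto_atTop_add_const_left _ b tendsto_natCast_atTop_atTop
        have heq : ∀ᶠ n : ℕ in atTop,
            1 + (a - 1 - b) / (b + n) = (a + n - 1) / (b + n) := by
          filter_upwards with n
          have hbn : (b + (n:ℝ)) ≠ 0 := (hpos b hb n).ne'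
          field_simp
          ring
        have := (tendsto_const_nhds.add h0 : Tendsto (fun n : ℕ => 1 + (a - 1 - b) / (b + n))
          atTop (𝓝 (1 + 0)))
        rw [add_zero] at this
        exact Tendsto.congr' heq this
      have hcont : Tendsto (fun n : ℕ => Real.log ((a + n - 1) / (b + n))) atTop (𝓝 0) := by
        have := (Real.continuousAt_log one_ne_zero).tendsto.comp hratio
        rwa [Real.log_one] at this
      apply hcont.congr'
      filter_upwards [eventually_ge_atTop 1] with n hn
      have hn1 : (1 : ℝ) ≤ n := mod_cast hn
      rw [Real.log_div (by linarith : a + (n:ℝ) - 1 ≠ 0) (hpos b hb n).ne']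
    exact tendsto_of_tendsto_of_tendsto_of_le_of_le' hlog tendsto_const_nhds hlb hub
  have := (tendsto_const_nhds.add htail :
    Tendsto (fun n : ℕ => (deriv f b - deriv f a)
      + (deriv f (a + n) - deriv f (b + n))) atTop (𝓝 ((deriv f b - deriv f a) + 0)))
  rwa [add_zero] at this

lemma hasSum_digamma_sub {a b : ℝ} (ha : 0 < a) (hb : 0 < b) :
    HasSum (fun n : ℕ => 1 / (a + n) - 1 / (b + n)) (digamma b - digamma a) := by
  rcases le_total a b with h | h
  · have := hasSum_aux ha h
    rwa [deriv_f_eq ha, deriv_f_eq hb] at this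
  · have := (hasSum_aux hb h).neg
    rw [deriv_f_eq ha, deriv_f_eq hb] at this
    simpa [neg_sub] using this

end DigammaAux

open Set Filter Topology DigammaAux

lemma exp_integral_aux {k : ℝ} (hk : 0 < k) :
    ∫ x in Set.Ioi (0 : ℝ), Real.exp (-k * x) = 1 / k := by
  have h := integral_comp_mul_left_Ioi (fun y : ℝ => Real.exp (-y)) 0 hk
  simp only [mul_zero] at h
  calc ∫ x in Set.Ioi (0 : ℝ), Real.exp (-k * x)
      = ∫ x in Set.Ioi (0 : ℝ), (fun y : ℝ => Real.exp (-y)) (k * x) := by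
        apply setIntegral_congr_fun measurableSet_Ioi
        intro x _
        simp [neg_mul]
    _ = k⁻¹ • ∫ x in Set.Ioi (0 : ℝ), Real.exp (-x) := h
    _ = 1 / k := by rw [integral_exp_neg_Ioi_zero, smul_eq_mul, mul_one, one_div]

lemma integral_aux (p q r s : ℝ) (hs : s < r) (hp : p < r) (hq : q < r) (hqp : q ≤ p) :
    ∫ x in Set.Ioi (0 : ℝ),
        (Real.exp (p * x) - Real.exp (q * x)) / (Real.exp (r * x) - Real.exp (s * x))
      = (1 / (r - s)) * (digamma ((r - q) / (r - s)) - digamma ((r - p) / (r - s))) := by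
  set c := r - s with hc_def
  have hc : 0 < c := sub_pos.mpr hs
  set a := (r - p) / c with ha_def
  set b := (r - q) / c with hb_def
  have ha : 0 < a := div_pos (sub_pos.mpr hp) hc
  have hb : 0 < b := div_pos (sub_pos.mpr hq) hc
  have hab : a ≤ b := by
    rw [ha_def, hb_def]
    exact (div_le_div_iff_of_pos_right hc).mpr (by linarith)
  have hac : a * c = r - p := div_mul_cancel₀ _ hc.ne'
  have hbc : b * c = r - q := div_mul_cancel₀ _ hc.ne'
  have hpos : ∀ (x : ℝ), 0 < x → ∀ n : ℕ, 0 < x + n :=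
    fun x hx n => add_pos_of_pos_of_nonneg hx n.cast_nonneg
  set F : ℕ → ℝ → ℝ :=
    fun n x => Real.exp (-((a + n) * c) * x) - Real.exp (-((b + n) * c) * x) with hF_def
  have hFint : ∀ n : ℕ, Integrable (F n) (volume.restrict (Set.Ioi 0)) := by
    intro n
    exact (exp_neg_integrableOn_Ioi 0 (mul_pos (hpos a ha n) hc)).sub
      (exp_neg_integrableOn_Ioi 0 (mul_pos (hpos b hb n) hc))
  have hval : ∀ n : ℕ, ∫ x in Set.Ioi (0 : ℝ), F n x
      = (1 / (a + n) - 1 / (b + n)) * (1 / c) := by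
    intro n
    rw [hF_def]
    rw [integral_sub (exp_neg_integrableOn_Ioi 0 (mul_pos (hpos a ha n) hc))
      (exp_neg_integrableOn_Ioi 0 (mul_pos (hpos b hb n) hc)),
      exp_integral_aux (mul_pos (hpos a ha n) hc), exp_integral_aux (mul_pos (hpos b hb n) hc),
      sub_mul, one_div_mul_one_div, one_div_mul_one_div]
  have hFnonneg : ∀ n : ℕ, ∀ x ∈ Set.Ioi (0 : ℝ), 0 ≤ F n x := by
    intro n x hx
    rw [mem_Ioi] at hx
    have : Real.exp (-((b + n) * c) * x) ≤ Real.exp (-((a + n) * c) * x) := by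
      apply Real.exp_le_exp.mpr
      have hle : (a + n) * c ≤ (b + n) * c := by nlinarith
      nlinarith
    simpa [hF_def] using sub_nonneg.mpr this
  have hnorm : ∀ n : ℕ, ∫ x in Set.Ioi (0 : ℝ), ‖F n x‖
      = (1 / (a + n) - 1 / (b + n)) * (1 / c) := by
    intro n
    rw [← hval n]
    apply setIntegral_congr_fun measurableSet_Ioi
    intro x hx
    exact Real.norm_of_nonneg (hFnonneg n x hx)
  have hdig := hasSum_digamma_sub ha hb
  have hsummable : Summable fun n : ℕ => ∫ x in Set.Ioi (0 : ℝ), ‖F n x‖ := by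
    simp_rw [hnorm]
    exact hdig.summable.mul_right _
  have hinterchange := integral_tsum_of_summable_integral_norm hFint hsummable
  have hpointwise : ∀ x ∈ Set.Ioi (0 : ℝ), ∑' n : ℕ, F n x
      = (Real.exp (p * x) - Real.exp (q * x)) / (Real.exp (r * x) - Real.exp (s * x)) := by
    intro x hx
    rw [mem_Ioi] at hx
    have hcx : 0 < c * x := mul_pos hc hx
    have hu1 : Real.exp (-(c * x)) < 1 := Real.exp_lt_one_iff.mpr (by linarith)
    have hgeo := hasSum_geometric_of_lt_one (Real.exp_nonneg _) hu1
    have hmul := hgeo.mul_left (Real.exp (-(a * c) * x) - Real.exp (-(b * c) * x))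
    have hterm : ∀ n : ℕ, (Real.exp (-(a * c) * x) - Real.exp (-(b * c) * x))
        * Real.exp (-(c * x)) ^ n = F n x := by
      intro n
      rw [← Real.exp_nat_mul, hF_def, sub_mul, ← Real.exp_add, ← Real.exp_add]
      congr 2 <;> ring
    have hsum := (hmul.congr_fun fun n => (hterm n).symm)
    have hden : Real.exp (s * x) < Real.exp (r * x) := Real.exp_lt_exp.mpr (by nlinarith)
    have hden' : Real.exp (r * x) - Real.exp (s * x) ≠ 0 := by linarith
    have h1 : (1 : ℝ) - Real.exp (-(c * x)) ≠ 0 := by linarith [Real.exp_pos (-(c * x))]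
    rw [hsum.tsum_eq, ← div_eq_mul_inv, div_eq_div_iff h1 hden']
    rw [hac, hbc, hc_def]
    simp only [sub_mul, mul_sub, mul_one, ← Real.exp_add]
    rw [show -(r - p) * x + r * x = p * x by ring, show -(r - p) * x + s * x = p * x + -((r-s)*x) by ring,
      show -(r - q) * x + r * x = q * x by ring, show -(r - q) * x + s * x = q * x + -((r-s)*x) by ring,
      Real.exp_add, Real.exp_add]
    simp only [← Real.exp_add]
    ring_nf
  calc ∫ x in Set.Ioi (0 : ℝ),
        (Real.exp (p * x) - Real.exp (q * x)) / (Real.exp (r * x) - Real.exp (s * x))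
      = ∫ x in Set.Ioi (0 : ℝ), ∑' n : ℕ, F n x := by
        refine setIntegral_congr_fun measurableSet_Ioi fun x hx => ?_
        exact (hpointwise x hx).symm
    _ = ∑' n : ℕ, ∫ x in Set.Ioi (0 : ℝ), F n x := hinterchange.symm
    _ = ∑' n : ℕ, (1 / (a + n) - 1 / (b + n)) * (1 / c) := by simp_rw [hval]
    _ = (digamma b - digamma a) * (1 / c) := (hdig.mul_right _).tsum_eq
    _ = (1 / c) * (digamma b - digamma a) := by ring

theorem integral_exp_sub_exp_div_exp_sub_exp (p q r s : ℝ)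
    (hs : s < r) (hp : p < r) (hq : q < r) :
    ∫ x in Set.Ioi (0 : ℝ),
        (Real.exp (p * x) - Real.exp (q * x)) / (Real.exp (r * x) - Real.exp (s * x))
      = (1 / (r - s)) * (digamma ((r - q) / (r - s)) - digamma ((r - p) / (r - s))) := by
  rcases le_total q p with h | h
  · exact integral_aux p q r s hs hp hq h
  · have key := integral_aux q p r s hs hq hp h
    have heq : ∀ x : ℝ,
        (Real.exp (p * x) - Real.exp (q * x)) / (Real.exp (r * x) - Real.exp (s * x))
        = -((Real.exp (q * x) - Real.exp (p * x)) / (Real.exp (r * x) - Real.exp (s * x))) := by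
      intro x; ring
    simp_rw [heq]
    rw [integral_neg, key]
    ring
end
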